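/- Let T be the complete q-ary tree of depth d (q ≥ 2, d ≥ 1). For every S ⊆ V(T) there exists a left-ordered set S' ⊆ V(T) such that S' has the same number of vertices as S in every level of T and |δ(S')| ≤ |δ(S)|. -/

import Mathlib

open scoped Classical

/-- A vertex of the complete `q`-ary tree of depth `d`: a sequence over `Fin q`
of length at most `d`. -/
def QV (q d : ℕ) : Type := {l : List (Fin q) // l.length ≤ d}

instance (q d : ℕ) : Finite (QV q d) :=
  (List.finite_length_le (Fin q) d).to_subtype

/-- The complete `q`-ary tree of depth `d`: two vertices are adjacent exactly when
one is obtained from the other by appending a single element. -/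
def qTree (q d : ℕ) : SimpleGraph (QV q d) where
  Adj u v := (∃ a : Fin q, v.val = u.val ++ [a]) ∨ (∃ a : Fin q, u.val = v.val ++ [a])
  symm := by constructor; intro u v h; tauto
  loopless := by
    constructor
    rintro u (⟨a, ha⟩ | ⟨a, ha⟩) <;>
    · have := congrArg List.length ha
      simp at this

/-- The vertex border `δ(S)`: vertices outside `S` with a neighbour in `S`. -/
def vertexBorder {V : Type*} (G : SimpleGraph V) (S : Set V) : Set V :=
  {v | v ∉ S ∧ ∃ u ∈ S, G.Adj u v}

/-- `Φ_V(G, s)`: the minimum border size over vertex sets of size `s`. -/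
noncomputable def isoProfile {V : Type*} (G : SimpleGraph V) (s : ℕ) : ℕ :=
  sInf ((fun S => (vertexBorder G S).ncard) '' {S : Set V | S.ncard = s})

/-- `Φ_V(G)`: the vertex-isoperimetric peak, `max_{0 ≤ s ≤ |V|} Φ_V(G, s)`. -/
noncomputable def isoPeak {V : Type*} (G : SimpleGraph V) : ℕ :=
  sSup (isoProfile G '' Set.Icc 0 (Nat.card V))

/-- The vertex separation number: for each linear layout (a bijection from the
vertices to `{1, …, |V|}`, here modelled as `V ≃ Fin |V|`) take the maximum
border size of its prefix sets, then minimize over layouts. -/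
noncomputable def vsNum {V : Type*} (G : SimpleGraph V) : ℕ :=
  sInf {n | ∃ L : V ≃ Fin (Nat.card V),
    n = sSup {m | ∃ i : Fin (Nat.card V),
      m = (vertexBorder G {u | (L u : ℕ) ≤ (i : ℕ)}).ncard}}

namespace QV

variable {q d : ℕ}

/-- Level `i`: vertices at distance `i` from the root. -/
def level (q d : ℕ) (i : ℕ) : Set (QV q d) := {w | w.val.length = i}

/-- Descendants of `u` (including `u` itself). -/
def desc (u : QV q d) : Set (QV q d) := {w | u.val <+: w.val}

/-- `w` is a child of `u`. -/
def IsChildOf (w u : QV q d) : Prop := ∃ a : Fin q, w.val = u.val ++ [a]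

/-- `u` is to the left of `v`: same level and lexicographically smaller. -/
def LeftOf (u v : QV q d) : Prop :=
  u.val.length = v.val.length ∧ List.Lex (· < ·) u.val v.val

/-- `u` precedes `v` in the breadth-first ordering of the tree. -/
def Precedes (u v : QV q d) : Prop :=
  u.val.length < v.val.length ∨
    (u.val.length = v.val.length ∧ List.Lex (· < ·) u.val v.val)

/-- `u, v` are swappable in `S`. -/
def Swappable (S : Set (QV q d)) (u v : QV q d) : Prop :=
  LeftOf u v ∧ ((u ∉ S ∧ v ∈ S) ∨
    (u ∉ S ∧ v ∉ S ∧ (∀ w, IsChildOf w u → w ∉ S) ∧ (∃ w, IsChildOf w v ∧ w ∈ S)))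

/-- Level `i` of `S` is left-ordered: no swappable pair in level `i`. -/
def LevelLeftOrdered (S : Set (QV q d)) (i : ℕ) : Prop :=
  ∀ u v : QV q d, u.val.length = i → ¬ Swappable S u v

/-- `S` is left-ordered: every level is left-ordered. -/
def LeftOrdered (S : Set (QV q d)) : Prop := ∀ i, LevelLeftOrdered S i

/-- The canonical map used in a treeswap between `u` and `v`: a descendant of `u`
is sent to the corresponding descendant of `v` (same suffix), and vice versa;
other vertices are fixed. -/
noncomputable def swapAt (u v w : QV q d) : QV q d :=
  if h : u.val <+: w.val ∧ (v.val ++ w.val.drop u.val.length).length ≤ d then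
    ⟨v.val ++ w.val.drop u.val.length, h.2⟩
  else if h' : v.val <+: w.val ∧ (u.val ++ w.val.drop v.val.length).length ≤ d then
    ⟨u.val ++ w.val.drop v.val.length, h'.2⟩
  else w

/-- The treeswap of `S` between `u` and `v`. -/
noncomputable def treeswap (S : Set (QV q d)) (u v : QV q d) : Set (QV q d) :=
  {w | swapAt u v w ∈ S}

/-- The strict partial order `A < B` on subsets of the tree. -/
def SetPrec (A B : Set (QV q d)) : Prop :=
  (∀ i, (A ∩ level q d i).ncard = (B ∩ level q d i).ncard) ∧
  ∃ v, v ∈ A ∧ v ∉ B ∧ ∀ w, Precedes w v → (w ∈ A ↔ w ∈ B)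

/-- `S` is down-compressed. -/
def DownCompressed (S : Set (QV q d)) : Prop :=
  ∀ u ∈ S, ∀ v ∉ S,
    (vertexBorder (qTree q d) S).ncard ≤
      (vertexBorder (qTree q d) ((S ∪ {v}) \ {u})).ncard ∧
    (u.val.length < v.val.length →
      (vertexBorder (qTree q d) S).ncard <
        (vertexBorder (qTree q d) ((S ∪ {v}) \ {u})).ncard)

/-- `S'` is an aeolian compression of `S`. -/
def IsAeolianCompression (S S' : Set (QV q d)) : Prop :=
  ∃ u v : QV q d, LeftOf u v ∧
    ∃ R A : Set (QV q d), R.Nonempty ∧ R ⊆ S ∧ R ⊆ desc v ∧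
      A ⊆ desc u ∧ Disjoint A S ∧ A.ncard = R.ncard ∧
      S' = (S \ R) ∪ A ∧
      S'.ncard = S.ncard ∧
      (vertexBorder (qTree q d) S').ncard ≤ (vertexBorder (qTree q d) S).ncard

/-- `S` is aeolian-compressed. -/
def AeolianCompressed (S : Set (QV q d)) : Prop :=
  LeftOrdered S ∧ DownCompressed S ∧ ∀ S', ¬ IsAeolianCompression S S'

end QV

/-!
Among all sets with the level counts of `S` and border at most `|δ(S)|`, take one, `T`, whose
first vertices in breadth-first order are occupied as much as possible (colex-maximal for the
reversed breadth-first order). If `T` had a swappable pair `u, v`, choose it in the lowest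
possible level; exchanging the subtrees below `u` and `v` keeps every level count, gains an
earlier vertex (`u`, or the first occupied child of `v` moved below `u`), and does not enlarge
the border: the only edges it destroys are the two parent edges, and because the level above
is left-ordered, the parent of `u` is in `T` whenever the parent of `v` is, and otherwise still
has a neighbour in `T` whenever `v` is in `T`.
-/

namespace List

theorem Lex.append_of_length_eq {α : Type*} {r : α → α → Prop} {l₁ l₂ : List α}
    (h : Lex r l₁ l₂) (hl : l₁.length = l₂.length) (s₁ s₂ : List α) :
    Lex r (l₁ ++ s₁) (l₂ ++ s₂) := by
  induction h with
  | nil => simp at hl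
  | rel h => exact .rel h
  | cons _ ih => exact .cons (ih (by simpa using hl))

theorem lt_of_append_lt_append_left {α : Type*} [LT α] [Std.Irrefl (α := α) (· < ·)]
    {s t₁ t₂ : List α} (h : s ++ t₁ < s ++ t₂) : t₁ < t₂ := by
  induction s with
  | nil => simpa using h
  | cons a s ih => exact ih (cons_lt_cons_self.mp h)

end List

namespace QV

variable {q d : ℕ}

section BreadthFirst

def bfsKey (w : QV q d) : ℕ ×ₗ List (Fin q) := toLex (w.val.length, w.val)

lemma bfsKey_injective : Function.Injective (bfsKey : QV q d → ℕ ×ₗ List (Fin q)) :=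
  fun _ _ h => Subtype.ext (congrArg Prod.snd (toLex.injective h))

lemma precedes_iff_bfsKey_lt {u v : QV q d} : Precedes u v ↔ bfsKey u < bfsKey v :=
  (Prod.Lex.toLex_lt_toLex (x := (u.val.length, u.val)) (y := (v.val.length, v.val))).symm

lemma not_precedes_of_prefix {u w : QV q d} (h : u.val <+: w.val) : ¬ Precedes w u := by
  rintro (hlt | ⟨hl, hlex⟩)
  · exact absurd h.length_le (by omega)
  · exact List.lt_irrefl _ (h.eq_of_length hl.symm ▸ hlex)

/-- Colex order on the reversed breadth-first keys: a set is larger when it contains the first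
vertex on which the two sets differ. -/
noncomputable def bfsColex (T : Set (QV q d)) : Colex (Finset (ℕ ×ₗ List (Fin q))ᵒᵈ) :=
  toColex ((Set.toFinite T).toFinset.image (OrderDual.toDual ∘ bfsKey))

lemma SetPrec.bfsColex_lt {A B : Set (QV q d)} (h : SetPrec A B) : bfsColex B < bfsColex A := by
  obtain ⟨-, x, hxA, hxB, hagree⟩ := h
  have hinj : Function.Injective (OrderDual.toDual ∘ bfsKey : QV q d → (ℕ ×ₗ List (Fin q))ᵒᵈ) :=
    OrderDual.toDual.injective.comp bfsKey_injective
  rw [bfsColex, bfsColex, Finset.Colex.toColex_lt_toColex_iff_exists_forall_lt]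
  refine ⟨OrderDual.toDual (bfsKey x), ?_, ?_, ?_⟩
  · exact hinj.mem_finset_image.mpr ((Set.Finite.mem_toFinset _).mpr hxA)
  · exact fun h => hxB ((Set.Finite.mem_toFinset _).mp (hinj.mem_finset_image.mp h))
  · simp only [Finset.mem_image, Set.Finite.mem_toFinset, Function.comp_apply]
    rintro _ ⟨w, hwB, rfl⟩ hwA
    have hwA' : w ∉ A := fun hw => hwA ⟨w, hw, rfl⟩
    rw [OrderDual.toDual_lt_toDual, ← precedes_iff_bfsKey_lt]
    rcases lt_trichotomy (bfsKey w) (bfsKey x) with hlt | heq | hgt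
    · exact absurd ((hagree w (precedes_iff_bfsKey_lt.mpr hlt)).mpr hwB) hwA'
    · exact absurd (bfsKey_injective heq ▸ hwB) hxB
    · exact precedes_iff_bfsKey_lt.mpr hgt

end BreadthFirst

section Swap

variable {u v w x : QV q d}

lemma swapAt_of_eq_append_left (hl : u.val.length = v.val.length) {t : List (Fin q)}
    (ht : w.val = u.val ++ t) : (swapAt u v w).val = v.val ++ t := by
  have hlen : (v.val ++ w.val.drop u.val.length).length ≤ d := by
    have := w.prop
    simp only [ht, List.length_append, List.drop_left] at this ⊢
    omega
  calc (swapAt u v w).val = v.val ++ w.val.drop u.val.length :=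
        congrArg Subtype.val (dif_pos ⟨⟨t, ht.symm⟩, hlen⟩)
    _ = v.val ++ t := by rw [ht, List.drop_left]

lemma swapAt_of_eq_append_right (hl : u.val.length = v.val.length) {t : List (Fin q)}
    (ht : w.val = v.val ++ t) : (swapAt u v w).val = u.val ++ t := by
  by_cases hu : u.val <+: w.val
  · have huv : u = v :=
      Subtype.ext ((List.prefix_of_prefix_length_le hu ⟨t, ht.symm⟩ hl.le).eq_of_length hl)
    subst huv
    exact swapAt_of_eq_append_left rfl ht
  · have hlen : (u.val ++ w.val.drop v.val.length).length ≤ d := by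
      have := w.prop
      simp only [ht, List.length_append, List.drop_left] at this ⊢
      omega
    calc (swapAt u v w).val = u.val ++ w.val.drop v.val.length :=
          congrArg Subtype.val (show swapAt u v w = ⟨_, hlen⟩ from
            (dif_neg (fun h => hu h.1)).trans (dif_pos ⟨⟨t, ht.symm⟩, hlen⟩))
      _ = u.val ++ t := by rw [ht, List.drop_left]

lemma swapAt_of_not_prefix (hu : ¬ u.val <+: w.val) (hv : ¬ v.val <+: w.val) :
    swapAt u v w = w :=
  (dif_neg (fun h => hu h.1)).trans (dif_neg (fun h => hv h.1))

lemma swapAt_left : swapAt u v u = v :=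
  (dif_pos ⟨List.prefix_refl _, by simpa using v.prop⟩).trans (Subtype.ext (by simp))

lemma swapAt_right (hl : u.val.length = v.val.length) : swapAt u v v = u :=
  Subtype.ext (by simpa using swapAt_of_eq_append_right hl (w := v) (t := []) (by simp))

lemma length_swapAt (hl : u.val.length = v.val.length) (w : QV q d) :
    (swapAt u v w).val.length = w.val.length := by
  by_cases hu : u.val <+: w.val
  · obtain ⟨t, ht⟩ := hu
    simp [swapAt_of_eq_append_left hl ht.symm, ← ht, hl]
  by_cases hv : v.val <+: w.val
  · obtain ⟨t, ht⟩ := hv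
    simp [swapAt_of_eq_append_right hl ht.symm, ← ht, hl]
  rw [swapAt_of_not_prefix hu hv]

lemma swapAt_of_length_lt (hl : u.val.length = v.val.length)
    (hw : w.val.length < u.val.length) : swapAt u v w = w :=
  swapAt_of_not_prefix (fun h => by have := h.length_le; omega)
    (fun h => by have := h.length_le; omega)

lemma swapAt_involutive (hl : u.val.length = v.val.length) : Function.Involutive (swapAt u v) := by
  intro w
  by_cases hu : u.val <+: w.val
  · obtain ⟨t, ht⟩ := hu
    exact Subtype.ext (by
      rw [swapAt_of_eq_append_right hl (swapAt_of_eq_append_left hl ht.symm), ht])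
  by_cases hv : v.val <+: w.val
  · obtain ⟨t, ht⟩ := hv
    exact Subtype.ext (by
      rw [swapAt_of_eq_append_left hl (swapAt_of_eq_append_right hl ht.symm), ht])
  rw [swapAt_of_not_prefix hu hv, swapAt_of_not_prefix hu hv]

lemma ncard_preimage_swapAt (hl : u.val.length = v.val.length) (A : Set (QV q d)) :
    (swapAt u v ⁻¹' A).ncard = A.ncard :=
  Set.ncard_preimage_of_injective_subset_range (swapAt_involutive hl).injective
    (by simp [(swapAt_involutive hl).surjective.range_eq])

lemma ncard_treeswap_inter_level (hl : u.val.length = v.val.length) (T : Set (QV q d)) (i : ℕ) :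
    (treeswap T u v ∩ level q d i).ncard = (T ∩ level q d i).ncard := by
  have hlevel : swapAt u v ⁻¹' level q d i = level q d i := by
    ext w
    simp [level, length_swapAt hl]
  rw [← ncard_preimage_swapAt hl (T ∩ level q d i), Set.preimage_inter, hlevel]
  rfl

end Swap

section Border

variable {u v w x : QV q d}

def parent (w : QV q d) : QV q d :=
  ⟨w.val.dropLast, by have := w.prop; simp only [List.length_dropLast]; omega⟩

lemma IsChildOf.eq_parent (h : IsChildOf w x) : x = parent w := by
  obtain ⟨a, ha⟩ := h
  exact Subtype.ext (by simp [parent, ha])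

lemma isChildOf_parent (hw : w.val ≠ []) : IsChildOf w (parent w) :=
  ⟨w.val.getLast hw, (List.dropLast_append_getLast hw).symm⟩

lemma IsChildOf.length_eq (h : IsChildOf w x) : w.val.length = x.val.length + 1 := by
  obtain ⟨a, ha⟩ := h
  simp [ha]

lemma IsChildOf.adj (h : IsChildOf w x) : (qTree q d).Adj x w := Or.inl h

lemma adj_swapAt_of_isChildOf (hl : u.val.length = v.val.length) (h : IsChildOf w x) :
    (qTree q d).Adj (swapAt u v x) (swapAt u v w) ∨ w = u ∨ w = v := by
  obtain ⟨a, ha⟩ := h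
  by_cases hux : u.val <+: x.val
  · obtain ⟨t, ht⟩ := hux
    refine Or.inl (Or.inl ⟨a, ?_⟩)
    rw [swapAt_of_eq_append_left hl (t := t ++ [a]) (by rw [ha, ← ht, List.append_assoc]),
      swapAt_of_eq_append_left hl ht.symm, List.append_assoc]
  by_cases hvx : v.val <+: x.val
  · obtain ⟨t, ht⟩ := hvx
    refine Or.inl (Or.inl ⟨a, ?_⟩)
    rw [swapAt_of_eq_append_right hl (t := t ++ [a]) (by rw [ha, ← ht, List.append_assoc]),
      swapAt_of_eq_append_right hl ht.symm, List.append_assoc]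
  rw [swapAt_of_not_prefix hux hvx]
  by_cases huw : u.val <+: w.val
  · rw [ha, List.prefix_concat_iff] at huw
    exact Or.inr (Or.inl (Subtype.ext (ha.trans (huw.resolve_right hux).symm)))
  by_cases hvw : v.val <+: w.val
  · rw [ha, List.prefix_concat_iff] at hvw
    exact Or.inr (Or.inr (Subtype.ext (ha.trans (hvw.resolve_right hvx).symm)))
  rw [swapAt_of_not_prefix huw hvw]
  exact Or.inl (Or.inl ⟨a, ha⟩)

lemma ncard_vertexBorder_treeswap_le {T : Set (QV q d)} (hl : u.val.length = v.val.length)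
    (hpu : v ∈ T → parent u ∉ T → parent u ∈ vertexBorder (qTree q d) T)
    (hv : parent u ∈ T → v ∉ T → v ∈ vertexBorder (qTree q d) T)
    (hpv : u ∈ T → parent v ∉ T → parent v ∈ vertexBorder (qTree q d) T)
    (hu : parent v ∈ T → u ∉ T → u ∈ vertexBorder (qTree q d) T) :
    (vertexBorder (qTree q d) (treeswap T u v)).ncard ≤ (vertexBorder (qTree q d) T).ncard := by
  have hparent : ∀ {c p : QV q d}, IsChildOf c p → (c = u ∨ c = v) → swapAt u v p = p := by
    rintro c p hcp (rfl | rfl) <;>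
      exact swapAt_of_length_lt hl (by have := hcp.length_eq; omega)
  have hsub : vertexBorder (qTree q d) (treeswap T u v) ⊆
      swapAt u v ⁻¹' vertexBorder (qTree q d) T := by
    rintro w ⟨hw, x, hx, hxw | hxw⟩
    all_goals
      change swapAt u v x ∈ T at hx
      change swapAt u v w ∉ T at hw
      show swapAt u v w ∈ vertexBorder (qTree q d) T
    · change IsChildOf w x at hxw
      rcases adj_swapAt_of_isChildOf hl hxw with hadj | rfl | rfl
      · exact ⟨hw, _, hx, hadj⟩
      · rw [hparent hxw (Or.inl rfl), hxw.eq_parent] at hx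
        rw [swapAt_left] at hw ⊢
        exact hv hx hw
      · rw [hparent hxw (Or.inr rfl), hxw.eq_parent] at hx
        rw [swapAt_right hl] at hw ⊢
        exact hu hx hw
    · change IsChildOf x w at hxw
      rcases adj_swapAt_of_isChildOf hl hxw with hadj | rfl | rfl
      · exact ⟨hw, _, hx, hadj.symm⟩
      · rw [swapAt_left] at hx
        rw [hparent hxw (Or.inl rfl), hxw.eq_parent] at hw ⊢
        exact hpu hx hw
      · rw [swapAt_right hl] at hx
        rw [hparent hxw (Or.inr rfl), hxw.eq_parent] at hw ⊢
        exact hpv hx hw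
  calc (vertexBorder (qTree q d) (treeswap T u v)).ncard
      ≤ (swapAt u v ⁻¹' vertexBorder (qTree q d) T).ncard :=
        Set.ncard_le_ncard hsub (Set.toFinite _)
    _ = (vertexBorder (qTree q d) T).ncard := ncard_preimage_swapAt hl _

end Border

section Swappable

variable {T : Set (QV q d)} {u v x : QV q d}

lemma LeftOf.ne_nil_left (h : LeftOf u v) : u.val ≠ [] := by
  intro hu
  have hv : v.val = [] := List.eq_nil_of_length_eq_zero (by rw [← h.1, hu]; rfl)
  exact List.lt_irrefl [] (hu ▸ hv ▸ h.2)

lemma LeftOf.ne_nil_right (h : LeftOf u v) : v.val ≠ [] :=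
  fun hv => h.ne_nil_left (List.eq_nil_of_length_eq_zero (by rw [h.1, hv]; rfl))

lemma LeftOf.parent_eq_or_leftOf (h : LeftOf u v) : parent u = parent v ∨ LeftOf (parent u) (parent v) := by
  have hlen : (parent u).val.length = (parent v).val.length := by
    simp [parent, List.length_dropLast, h.1]
  rcases lt_trichotomy (parent u).val (parent v).val with hlt | heq | hgt
  · exact Or.inr ⟨hlen, hlt⟩
  · exact Or.inl (Subtype.ext heq)
  · have hvu := List.Lex.append_of_length_eq hgt hlen.symm
      [v.val.getLast h.ne_nil_right] [u.val.getLast h.ne_nil_left]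
    simp only [QV.parent, List.dropLast_append_getLast] at hvu
    exact absurd hvu (List.lt_asymm h.2)

lemma LevelLeftOrdered.mem_of_mem {i : ℕ} (hT : LevelLeftOrdered T i) (hu : u.val.length = i)
    (huv : u = v ∨ LeftOf u v) (hv : v ∈ T) : u ∈ T := by
  rcases huv with rfl | huv
  · exact hv
  by_contra hu'
  exact hT u v hu ⟨huv, Or.inl ⟨hu', hv⟩⟩

lemma LevelLeftOrdered.mem_or_exists_child {i : ℕ} (hT : LevelLeftOrdered T i)
    (hu : u.val.length = i) (huv : u = v ∨ LeftOf u v) (hv : ∃ c, IsChildOf c v ∧ c ∈ T) :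
    u ∈ T ∨ ∃ c, IsChildOf c u ∧ c ∈ T := by
  rcases huv with rfl | huv
  · exact Or.inr hv
  by_contra! h
  have hv' : v ∉ T := fun hv' => h.1 (hT.mem_of_mem hu (Or.inr huv) hv')
  exact hT u v hu ⟨huv, Or.inr ⟨h.1, hv', h.2, hv⟩⟩

lemma Swappable.ncard_vertexBorder_treeswap_le (h : Swappable T u v)
    (hT : LevelLeftOrdered T (parent u).val.length) :
    (vertexBorder (qTree q d) (treeswap T u v)).ncard ≤ (vertexBorder (qTree q d) T).ncard := by
  obtain ⟨huv, hcase⟩ := h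
  have hu : u ∉ T := by rcases hcase with h | h <;> exact h.1
  refine QV.ncard_vertexBorder_treeswap_le huv.1 (fun hvT hpu => ?_) (fun _ hvT => ?_)
    (fun huT => absurd huT hu) (fun hpv _ => ?_)
  · rcases hT.mem_or_exists_child rfl huv.parent_eq_or_leftOf ⟨v, isChildOf_parent huv.ne_nil_right, hvT⟩
      with h | ⟨c, hc, hcT⟩
    · exact absurd h hpu
    · exact ⟨hpu, c, hcT, hc.adj.symm⟩
  · rcases hcase with ⟨-, hv⟩ | ⟨-, -, -, c, hc, hcT⟩
    · exact absurd hv hvT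
    · exact ⟨hvT, c, hcT, hc.adj.symm⟩
  · exact ⟨hu, parent u, hT.mem_of_mem rfl huv.parent_eq_or_leftOf hpv,
      (isChildOf_parent huv.ne_nil_left).adj⟩

lemma precedes_swapAt_of_prefix (h : LeftOf u v) {w : QV q d} (hx : u.val <+: x.val)
    (hw : v.val <+: w.val) (hwx : Precedes w x) : Precedes (swapAt u v w) x := by
  rcases hwx with hlt | ⟨-, hlex⟩
  · exact Or.inl (by rwa [length_swapAt h.1])
  · obtain ⟨s, hs⟩ := hx
    obtain ⟨t, ht⟩ := hw
    have hxw := List.Lex.append_of_length_eq h.2 h.1 s t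
    rw [hs, ht] at hxw
    exact absurd hlex (List.lt_asymm hxw)

/-- Outside the subtrees of `u` and `v` the treeswap changes nothing, and vertices of the subtree
of `v` that precede a vertex below `u` come paired with such vertices below `u`. -/
lemma mem_treeswap_iff_of_precedes (h : LeftOf u v) (hx : u.val <+: x.val)
    (hagree : ∀ w, u.val <+: w.val → Precedes w x → (w ∈ T ↔ swapAt u v w ∈ T))
    {w : QV q d} (hwx : Precedes w x) : w ∈ T ↔ w ∈ treeswap T u v := by
  by_cases hu : u.val <+: w.val
  · exact hagree w hu hwx
  by_cases hv : v.val <+: w.val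
  · obtain ⟨t, ht⟩ := hv
    have hu' : u.val <+: (swapAt u v w).val := ⟨t, (swapAt_of_eq_append_right h.1 ht.symm).symm⟩
    have := hagree _ hu' (precedes_swapAt_of_prefix h hx ⟨t, ht⟩ hwx)
    rw [swapAt_involutive h.1 w] at this
    exact this.symm
  · show w ∈ T ↔ swapAt u v w ∈ T
    rw [swapAt_of_not_prefix hu hv]

lemma setPrec_treeswap_of_mem (h : LeftOf u v) (hu : u ∉ T) (hv : v ∈ T) :
    SetPrec (treeswap T u v) T := by
  refine ⟨ncard_treeswap_inter_level h.1 T, u, ?_, hu, fun w hw =>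
    (mem_treeswap_iff_of_precedes h (List.prefix_refl _)
      (fun w hw hwu => absurd hwu (not_precedes_of_prefix hw)) hw).symm⟩
  show swapAt u v u ∈ T
  rwa [swapAt_left]

lemma setPrec_treeswap_of_child (h : LeftOf u v) (hu : u ∉ T) (hv : v ∉ T)
    (hchu : ∀ w, IsChildOf w u → w ∉ T) {c : QV q d} (hc : IsChildOf c v) (hcT : c ∈ T)
    (hmin : ∀ c', IsChildOf c' v → c' ∈ T → bfsKey c ≤ bfsKey c') :
    SetPrec (treeswap T u v) T := by
  obtain ⟨b, hb⟩ := hc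
  have hx : (swapAt u v c).val = u.val ++ [b] := swapAt_of_eq_append_right h.1 hb
  refine ⟨ncard_treeswap_inter_level h.1 T, swapAt u v c, ?_, hchu _ ⟨b, hx⟩, fun w hw =>
    (mem_treeswap_iff_of_precedes h ⟨[b], hx.symm⟩ (fun w hw' hwx => ?_) hw).symm⟩
  · show swapAt u v (swapAt u v c) ∈ T
    rwa [swapAt_involutive h.1]
  obtain ⟨t, ht⟩ := hw'
  have hσw : (swapAt u v w).val = v.val ++ t := swapAt_of_eq_append_left h.1 ht.symm
  rcases hwx with hlt | ⟨hlen, hlex⟩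
  · have ht0 : t = [] := by
      rw [hx, ← ht] at hlt
      simpa using hlt
    have hwu : w = u := Subtype.ext (by rw [← ht, ht0, List.append_nil])
    rw [hwu, swapAt_left]
    exact iff_of_false hu hv
  · obtain ⟨b', rfl⟩ : ∃ b', t = [b'] := List.length_eq_one_iff.mp (by
      rw [hx, ← ht] at hlen
      simpa using hlen)
    refine iff_of_false (hchu w ⟨b', ht.symm⟩) (fun hσT => ?_)
    have hlt : Precedes (swapAt u v w) c := by
      rw [hx, ← ht] at hlex
      refine Or.inr ⟨by simp [hσw, hb], ?_⟩
      rw [hσw, hb]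
      exact List.append_left_lt (List.lt_of_append_lt_append_left hlex)
    exact (precedes_iff_bfsKey_lt.mp hlt).not_ge (hmin _ ⟨b', hσw⟩ hσT)

lemma Swappable.setPrec_treeswap (h : Swappable T u v) : SetPrec (treeswap T u v) T := by
  obtain ⟨huv, ⟨hu, hv⟩ | ⟨hu, hv, hchu, hchv⟩⟩ := h
  · exact setPrec_treeswap_of_mem huv hu hv
  · obtain ⟨c, ⟨hc, hcT⟩, hmin⟩ :=
      Set.exists_min_image {c | IsChildOf c v ∧ c ∈ T} bfsKey (Set.toFinite _) hchv
    exact setPrec_treeswap_of_child huv hu hv hchu hc hcT fun c' hc' hc'T => hmin c' ⟨hc', hc'T⟩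

lemma exists_swappable_of_not_leftOrdered (hT : ¬ LeftOrdered T) :
    ∃ u v, Swappable T u v ∧ LevelLeftOrdered T (parent u).val.length := by
  have hex : ∃ i, ¬ LevelLeftOrdered T i := by simpa [LeftOrdered] using hT
  obtain ⟨u, v, hu, huv⟩ : ∃ u v : QV q d, u.val.length = Nat.find hex ∧ Swappable T u v := by
    simpa [LevelLeftOrdered] using Nat.find_spec hex
  refine ⟨u, v, huv, by_contra fun h => ?_⟩
  have hle := Nat.find_min' hex h
  have := List.length_pos_iff.mpr huv.1.ne_nil_left
  simp only [QV.parent, List.length_dropLast] at hle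
  omega

end Swappable

end QV

theorem exists_left_ordered_compression_general (q d : ℕ) (S : Set (QV q d)) :
    ∃ S' : Set (QV q d), QV.LeftOrdered S' ∧
      (∀ i, (S' ∩ QV.level q d i).ncard = (S ∩ QV.level q d i).ncard) ∧
      (vertexBorder (qTree q d) S').ncard ≤ (vertexBorder (qTree q d) S).ncard := by
  obtain ⟨T, ⟨hlevel, hborder⟩, hmax⟩ := (Set.toFinite {T : Set (QV q d) |
      (∀ i, (T ∩ QV.level q d i).ncard = (S ∩ QV.level q d i).ncard) ∧
      (vertexBorder (qTree q d) T).ncard ≤ (vertexBorder (qTree q d) S).ncard}).exists_maximalFor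
    QV.bfsColex _ ⟨S, fun _ => rfl, le_rfl⟩
  refine ⟨T, by_contra fun hT => ?_, hlevel, hborder⟩
  obtain ⟨u, v, huv, hparent⟩ := QV.exists_swappable_of_not_leftOrdered hT
  have hprec := huv.setPrec_treeswap
  have hlt := hprec.bfsColex_lt
  exact hlt.not_ge (hmax ⟨fun i => (hprec.1 i).trans (hlevel i),
    (huv.ncard_vertexBorder_treeswap_le hparent).trans hborder⟩ hlt.le)

theorem exists_left_ordered_compression (q d : ℕ) (hq : 2 ≤ q) (hd : 1 ≤ d)
    (S : Set (QV q d)) :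
    ∃ S' : Set (QV q d), QV.LeftOrdered S' ∧
      (∀ i, (S' ∩ QV.level q d i).ncard = (S ∩ QV.level q d i).ncard) ∧
      (vertexBorder (qTree q d) S').ncard ≤ (vertexBorder (qTree q d) S).ncard :=
  exists_left_ordered_compression_general q d S
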